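/- Let φ = C_1 ∧ ⋯ ∧ C_m be a propositional formula in 3-CNF over the variables x_1,…,x_n, where each clause C_j is a disjunction of exactly three literals. Define the TBox T'_φ, all of whose concepts use only the Boolean operator ⊥ (the nullary constant false) besides atomic concepts, using atomic concepts t, d_0,…,d_n, x_1,…,x_n, x_1',…,x_n', C_1,…,C_m, C_1',…,C_m', f, f' and roles R_1,…,R_n, R_{x_1},…,R_{x_n}, R_{d_0},…,R_{d_n}, R_{C_1},…,R_{C_m}, F, and P_{1j}, P_{2j} for 1 ≤ j ≤ m. For a literal ℓ, let ℓ~ denote the atomic concept x_i' if ℓ = x_i and the atomic concept x_i if ℓ = ¬x_i. T'_φ consists of the axioms: (2) x_i ≡ ∃R_{x_i}.t and x_i' ≡ ∀R_{x_i}.⊥ for 1 ≤ i ≤ n; (3) d_i ⊑ ∃R_{i+1}.x_{i+1} and d_i ⊑ ∃R_{i+1}.x_{i+1}' for 0 ≤ i < n; (4) d_i ⊑ ∀R_{i+1}.d_{i+1} for 0 ≤ i < n, together with d_i ⊑ ∃R_{d_i}.t and d_j ⊑ ∀R_{d_i}.⊥ for all 0 ≤ i < j ≤ n; (5) x_i ⊑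 ∀R_j.x_i and x_i' ⊑ ∀R_j.x_i' for 1 ≤ i < j ≤ n; (6) for each clause C_j = ℓ_{1j} ∨ ℓ_{2j} ∨ ℓ_{3j}: ℓ~_{1j} ⊑ ∃P_{1j}.t, ℓ~_{2j} ⊑ ∀P_{1j}.ℓ~_{2j}, ∃P_{1j}.ℓ~_{2j} ⊑ ∃P_{2j}.t, ℓ~_{3j} ⊑ ∀P_{2j}.ℓ~_{3j}, and ∃P_{2j}.ℓ~_{3j} ⊑ C_j'; (7) C_j' ⊑ f for 1 ≤ j ≤ m; (8) f ⊑ ∃F.t and f' ⊑ ∀F.⊥; (9) C_j ≡ ∃R_{C_j}.t and C_j' ≡ ∀R_{C_j}.⊥ for 1 ≤ j ≤ m; (10) d_0 ⊑ ∀R_1.∀R_2.⋯∀R_n.f'. Then φ is a tautology (true under every assignment of the variables x_1,…,x_n) if and only if there exists an interpretation I satisfying T'_φ with d_0^I ≠ ∅. -/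

import Mathlib

/-- A Boolean operator: an arity `n` together with a Boolean function `Bool^n → Bool`. -/
abbrev BOp : Type := Σ n : ℕ, (Fin n → Bool) → Bool

/-- Concepts over the full signature: atomic concepts and roles are indexed by `ℕ`;
`app o cs` applies the Boolean operator `o` to `o.1` many argument concepts. -/
inductive DLConcept : Type where
  | atom : ℕ → DLConcept
  | app : (o : BOp) → (Fin o.1 → DLConcept) → DLConcept
  | ex : ℕ → DLConcept → DLConcept
  | all : ℕ → DLConcept → DLConcept

/-- An interpretation: a nonempty domain `Δ`, a subset of `Δ` for each atomic concept,
a binary relation for each role, and an element for each individual name. -/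
structure DLInterp (Δ : Type) where
  ne : Nonempty Δ
  atom : ℕ → Set Δ
  role : ℕ → Set (Δ × Δ)
  ind : ℕ → Δ

attribute [local instance] Classical.propDecidable

/-- Semantics of concepts. -/
noncomputable def DLConcept.sem {Δ : Type} (I : DLInterp Δ) : DLConcept → Set Δ
  | .atom A => I.atom A
  | .app o cs => {x | o.2 (fun i => decide (x ∈ DLConcept.sem I (cs i))) = true}
  | .ex R C => {x | ∃ y, (x, y) ∈ I.role R ∧ y ∈ DLConcept.sem I C}
  | .all R C => {x | ∀ y, (x, y) ∈ I.role R → y ∈ DLConcept.sem I C}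

/-- `C.over B` : the concept `C` uses only Boolean operators from `B`. -/
def DLConcept.over (B : Set BOp) : DLConcept → Prop
  | .atom _ => True
  | .app o cs => o ∈ B ∧ ∀ i, DLConcept.over B (cs i)
  | .ex _ C => DLConcept.over B C
  | .all _ C => DLConcept.over B C

/-- Satisfaction of a GCI `C ⊑ D`. -/
def satGCI {Δ : Type} (I : DLInterp Δ) (C D : DLConcept) : Prop := C.sem I ⊆ D.sem I

/-- A TBox is a finite list of GCIs; satisfaction of a TBox. -/
def satTBox {Δ : Type} (I : DLInterp Δ) (T : List (DLConcept × DLConcept)) : Prop :=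
  ∀ p ∈ T, satGCI I p.1 p.2

/-- TBox satisfiability. -/
def TBoxSat (T : List (DLConcept × DLConcept)) : Prop :=
  ∃ (Δ : Type) (I : DLInterp Δ), satTBox I T

/-- The nullary operator `⊤` (constant true) and the concept it denotes. -/
def topOp : BOp := ⟨0, fun _ => true⟩
def ctop : DLConcept := .app topOp (fun i => i.elim0)

/-- The nullary operator `⊥` (constant false) and the concept it denotes. -/
def botOp : BOp := ⟨0, fun _ => false⟩
def cbot : DLConcept := .app botOp (fun i => i.elim0)

/-- The unary negation operator and negated concepts. -/
def negOp : BOp := ⟨1, fun v => !(v 0)⟩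
def cneg (C : DLConcept) : DLConcept := .app negOp (fun _ => C)

/-! ### 3-CNF formulas

Variables are `x_0, …, x_{n-1}` (zero-based; the paper's `x_{i+1}` is our `x_i`).
A literal is a pair `(v, sign)` with `sign = true` for the positive literal. -/

/-- Evaluation of a literal under an assignment `σ : ℕ → Bool`. -/
def litEval {n : ℕ} (σ : ℕ → Bool) (l : Fin n × Bool) : Bool :=
  if l.2 then σ l.1.val else !(σ l.1.val)

/-- Evaluation of the 3-CNF formula `φ = C_1 ∧ ⋯ ∧ C_m` under an assignment. -/
def matrixEval {n m : ℕ}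
    (Cl : Fin m → (Fin n × Bool) × (Fin n × Bool) × (Fin n × Bool))
    (σ : ℕ → Bool) : Prop :=
  ∀ j : Fin m,
    (litEval σ (Cl j).1 || litEval σ (Cl j).2.1 || litEval σ (Cl j).2.2) = true

/-! ### Names of the atomic concepts and roles used by `T'_φ`
(pairwise distinct by the choice of residues). -/

def dA (i : ℕ) : ℕ := 8 * i       -- level concepts d_0, …, d_n
def xpA (i : ℕ) : ℕ := 8 * i + 1  -- variable concepts x_{i+1}
def xmA (i : ℕ) : ℕ := 8 * i + 2  -- complementary variable concepts x_{i+1}'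
def cpA (j : ℕ) : ℕ := 8 * j + 3  -- clause concepts C_{j+1}
def cmA (j : ℕ) : ℕ := 8 * j + 4  -- complementary clause concepts C_{j+1}'
def fA : ℕ := 5                   -- concept f
def fA' : ℕ := 6                  -- concept f'
def tA : ℕ := 7                   -- concept t (replacing ⊤)

def rF : ℕ := 7                   -- role F
def rR (i : ℕ) : ℕ := 8 * i       -- roles R_{i+1}
def rX (i : ℕ) : ℕ := 8 * i + 1   -- roles R_{x_{i+1}}
def rD (i : ℕ) : ℕ := 8 * i + 2   -- roles R_{d_i}
def rC (j : ℕ) : ℕ := 8 * j + 3   -- roles R_{C_{j+1}}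
def rP1 (j : ℕ) : ℕ := 8 * j + 4  -- roles P_{1,j+1}
def rP2 (j : ℕ) : ℕ := 8 * j + 5  -- roles P_{2,j+1}

/-- `ℓ~`: the atomic concept `x_i'` if `ℓ = x_i`, and `x_i` if `ℓ = ¬x_i`. -/
def til {n : ℕ} (l : Fin n × Bool) : DLConcept :=
  if l.2 then .atom (xmA l.1.val) else .atom (xpA l.1.val)

/-- The atomic concept `t`. -/
def ct : DLConcept := .atom tA

/-- `C ≡ D` as the two GCIs `C ⊑ D` and `D ⊑ C`. -/
def eqAx (C D : DLConcept) : List (DLConcept × DLConcept) := [(C, D), (D, C)]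

/-- `∀R_1.∀R_2.⋯∀R_n.base`. -/
def allChain : List ℕ → DLConcept → DLConcept
  | [], base => base
  | r :: rest, base => .all r (allChain rest base)

/-- The TBox `T'_φ` of STATEMENT 16, for the 3-CNF formula `φ = C_1 ∧ ⋯ ∧ C_m`;
its concepts use only the Boolean operator `⊥` besides atomic concepts. -/
def Tphi' (n m : ℕ)
    (Cl : Fin m → (Fin n × Bool) × (Fin n × Bool) × (Fin n × Bool)) :
    List (DLConcept × DLConcept) :=
  -- (2) x_i ≡ ∃R_{x_i}.t and x_i' ≡ ∀R_{x_i}.⊥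
  (List.ofFn fun i : Fin n =>
        eqAx (.atom (xpA i.val)) (.ex (rX i.val) ct) ++
        eqAx (.atom (xmA i.val)) (.all (rX i.val) cbot)).flatten
  -- (3) d_i ⊑ ∃R_{i+1}.x_{i+1} and d_i ⊑ ∃R_{i+1}.x_{i+1}'
  ++ (List.ofFn fun i : Fin n =>
        [(DLConcept.atom (dA i.val), DLConcept.ex (rR i.val) (.atom (xpA i.val))),
         (DLConcept.atom (dA i.val), DLConcept.ex (rR i.val) (.atom (xmA i.val)))]).flatten
  -- (4) d_i ⊑ ∀R_{i+1}.d_{i+1}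
  ++ (List.ofFn fun i : Fin n =>
        (DLConcept.atom (dA i.val), DLConcept.all (rR i.val) (.atom (dA (i.val + 1)))))
  -- (4) d_i ⊑ ∃R_{d_i}.t and d_j ⊑ ∀R_{d_i}.⊥ for 0 ≤ i < j ≤ n
  ++ ((List.range (n + 1)).flatMap fun i => (List.range (n + 1)).flatMap fun j =>
        if i < j then
          [(DLConcept.atom (dA i), DLConcept.ex (rD i) ct),
           (DLConcept.atom (dA j), DLConcept.all (rD i) cbot)]
        else [])
  -- (5) x_i ⊑ ∀R_j.x_i and x_i' ⊑ ∀R_j.x_i' for 1 ≤ i < j ≤ n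
  ++ ((List.range n).flatMap fun i => (List.range n).flatMap fun j =>
        if i < j then
          [(DLConcept.atom (xpA i), DLConcept.all (rR j) (.atom (xpA i))),
           (DLConcept.atom (xmA i), DLConcept.all (rR j) (.atom (xmA i)))]
        else [])
  -- (6) clause axioms for C_j = ℓ_{1j} ∨ ℓ_{2j} ∨ ℓ_{3j}
  ++ (List.ofFn fun j : Fin m =>
        [(til (Cl j).1, DLConcept.ex (rP1 j.val) ct),
         (til (Cl j).2.1, DLConcept.all (rP1 j.val) (til (Cl j).2.1)),
         (DLConcept.ex (rP1 j.val) (til (Cl j).2.1), DLConcept.ex (rP2 j.val) ct),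
         (til (Cl j).2.2, DLConcept.all (rP2 j.val) (til (Cl j).2.2)),
         (DLConcept.ex (rP2 j.val) (til (Cl j).2.2), DLConcept.atom (cmA j.val))]).flatten
  -- (7) C_j' ⊑ f
  ++ (List.ofFn fun j : Fin m => (DLConcept.atom (cmA j.val), DLConcept.atom fA))
  -- (8) f ⊑ ∃F.t and f' ⊑ ∀F.⊥
  ++ [(DLConcept.atom fA, DLConcept.ex rF ct),
      (DLConcept.atom fA', DLConcept.all rF cbot)]
  -- (9) C_j ≡ ∃R_{C_j}.t and C_j' ≡ ∀R_{C_j}.⊥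
  ++ (List.ofFn fun j : Fin m =>
        eqAx (.atom (cpA j.val)) (.ex (rC j.val) ct) ++
        eqAx (.atom (cmA j.val)) (.all (rC j.val) cbot)).flatten
  -- (10) d_0 ⊑ ∀R_1.∀R_2.⋯∀R_n.f'
  ++ [(DLConcept.atom (dA 0),
       allChain (List.ofFn fun i : Fin n => rR i.val) (.atom fA'))]

/-!
If `φ` is a tautology, a model is the binary tree `List Bool` of partial assignments: `R_{i+1}`
appends one bit to a word of length `i`, `x_i` holds where bit `i` is set, and each remaining role
is the diagonal on the set where its `∃`-concept has to hold. As no word falsifies a clause, the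
concepts `C_j'` and `f` are empty, so `F` can be empty and `f'` everything.

Conversely, fix an assignment `σ` and an element of `d_0`. Following `R_1, …, R_n` and choosing
`x_i` or `x_i'` as `σ` dictates, axiom (5) keeps the earlier choices, and (10) puts the leaf in
`f'`. If `σ` falsified a clause, the leaf would lie in all three `ℓ~`, hence by the gadget (6) in
`C_j' ⊑ f`; but `f ⊑ ∃F.t` and `f' ⊑ ∀F.⊥` are incompatible.
-/

section TBox

variable {Δ : Type} (I : DLInterp Δ)

lemma satTBox_nil : satTBox I [] := by simp [satTBox]

lemma satTBox_cons (p : DLConcept × DLConcept) (T : List (DLConcept × DLConcept)) :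
    satTBox I (p :: T) ↔ satGCI I p.1 p.2 ∧ satTBox I T := by
  simp [satTBox]

lemma satTBox_append (T T' : List (DLConcept × DLConcept)) :
    satTBox I (T ++ T') ↔ satTBox I T ∧ satTBox I T' := by
  simp [satTBox, or_imp, forall_and]

lemma satTBox_flatten (L : List (List (DLConcept × DLConcept))) :
    satTBox I L.flatten ↔ ∀ T ∈ L, satTBox I T := by
  simp only [satTBox, List.forall_mem_flatten]

lemma satTBox_flatMap {α : Type} (l : List α) (f : α → List (DLConcept × DLConcept)) :
    satTBox I (l.flatMap f) ↔ ∀ a ∈ l, satTBox I (f a) := by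
  simp only [satTBox, List.forall_mem_flatMap]

lemma satTBox_ofFn {k : ℕ} (f : Fin k → DLConcept × DLConcept) :
    satTBox I (List.ofFn f) ↔ ∀ i, satGCI I (f i).1 (f i).2 := by
  simp only [satTBox, List.forall_mem_ofFn_iff]

lemma satTBox_eqAx (C D : DLConcept) : satTBox I (eqAx C D) ↔ C.sem I = D.sem I := by
  simp [eqAx, satTBox_cons, satTBox_nil, satGCI, Set.Subset.antisymm_iff]

end TBox

section Semantics

variable {Δ : Type} {I : DLInterp Δ}

lemma sem_atom (a : ℕ) : (DLConcept.atom a).sem I = I.atom a := rfl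

lemma mem_sem_ex {r : ℕ} {C : DLConcept} {x : Δ} :
    x ∈ (DLConcept.ex r C).sem I ↔ ∃ y, (x, y) ∈ I.role r ∧ y ∈ C.sem I := Iff.rfl

lemma mem_sem_all {r : ℕ} {C : DLConcept} {x : Δ} :
    x ∈ (DLConcept.all r C).sem I ↔ ∀ y, (x, y) ∈ I.role r → y ∈ C.sem I := Iff.rfl

@[simp] lemma sem_cbot : cbot.sem I = ∅ := by
  ext x; simp [cbot, DLConcept.sem, botOp]

lemma allChain_drop {rs : List ℕ} {i : ℕ} (h : i < rs.length) (C : DLConcept) :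
    allChain (rs.drop i) C = .all rs[i] (allChain (rs.drop (i + 1)) C) := by
  rw [List.drop_eq_getElem_cons h, allChain]

lemma sem_allChain_eq_univ {C : DLConcept} (h : C.sem I = Set.univ) (rs : List ℕ) :
    (allChain rs C).sem I = Set.univ := by
  induction rs with
  | nil => exact h
  | cons r rs ih => ext x; simp [allChain, DLConcept.sem, ih]

end Semantics

def diagOn {α : Type} (S : Set α) : Set (α × α) := {p | p.2 = p.1 ∧ p.1 ∈ S}

@[simp] lemma mem_diagOn {α : Type} {S : Set α} {p : α × α} :
    p ∈ diagOn S ↔ p.2 = p.1 ∧ p.1 ∈ S := Iff.rfl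

def valuation (w : List Bool) (i : ℕ) : Bool := w.getD i false

lemma valuation_append_of_lt {w : List Bool} {i : ℕ} (h : i < w.length) (b : Bool) :
    valuation (w ++ [b]) i = valuation w i :=
  List.getD_append _ _ _ _ h

@[simp] lemma valuation_append_length (w : List Bool) (b : Bool) :
    valuation (w ++ [b]) w.length = b := by
  simp [valuation]

def falsifiers {n : ℕ} (l : Fin n × Bool) : Set (List Bool) :=
  {w | litEval (valuation w) l = false}

-- Names are decoded from their residue mod 8 (see `dA`, …, `rP2`): the atoms `f`, `f'`, `t` are
-- `5`, `6`, `7`, and the role `F` is `7`.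
noncomputable def treeModel {n m : ℕ}
    (Cl : Fin m → (Fin n × Bool) × (Fin n × Bool) × (Fin n × Bool)) : DLInterp (List Bool) where
  ne := ⟨[]⟩
  atom a := match a % 8 with
    | 0 => {w | w.length = a / 8}
    | 1 => {w | valuation w (a / 8) = true}
    | 2 => {w | valuation w (a / 8) = false}
    | 4 | 5 => ∅
    | _ => Set.univ
  role r := match r % 8 with
    | 0 => {p | p.1.length = r / 8 ∧ ∃ b, p.2 = p.1 ++ [b]}
    | 1 => diagOn {w | valuation w (r / 8) = true}
    | 2 => diagOn {w | w.length = r / 8}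
    | 3 => diagOn Set.univ
    | 4 => if h : r / 8 < m then diagOn (falsifiers (Cl ⟨r / 8, h⟩).1) else ∅
    | 5 => if h : r / 8 < m then
        diagOn (falsifiers (Cl ⟨r / 8, h⟩).1 ∩ falsifiers (Cl ⟨r / 8, h⟩).2.1) else ∅
    | _ => ∅
  ind _ := []

section TreeModel

variable {n m : ℕ} (Cl : Fin m → (Fin n × Bool) × (Fin n × Bool) × (Fin n × Bool))

@[simp] lemma treeModel_dA (i : ℕ) : (treeModel Cl).atom (dA i) = {w | w.length = i} := by
  simp [treeModel, dA]

@[simp] lemma treeModel_xpA (i : ℕ) :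
    (treeModel Cl).atom (xpA i) = {w | valuation w i = true} := by
  simp [treeModel, xpA, Nat.add_div]

@[simp] lemma treeModel_xmA (i : ℕ) :
    (treeModel Cl).atom (xmA i) = {w | valuation w i = false} := by
  simp [treeModel, xmA, Nat.add_div]

@[simp] lemma treeModel_cpA (j : ℕ) : (treeModel Cl).atom (cpA j) = Set.univ := by
  simp [treeModel, cpA, Nat.add_mod]

@[simp] lemma treeModel_cmA (j : ℕ) : (treeModel Cl).atom (cmA j) = ∅ := by
  simp [treeModel, cmA, Nat.add_mod]

@[simp] lemma treeModel_fA : (treeModel Cl).atom fA = ∅ := rfl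

@[simp] lemma treeModel_fA' : (treeModel Cl).atom fA' = Set.univ := rfl

@[simp] lemma sem_ct_treeModel : ct.sem (treeModel Cl) = Set.univ := rfl

@[simp] lemma treeModel_rR (i : ℕ) :
    (treeModel Cl).role (rR i) = {p | p.1.length = i ∧ ∃ b, p.2 = p.1 ++ [b]} := by
  simp [treeModel, rR]

@[simp] lemma treeModel_rX (i : ℕ) :
    (treeModel Cl).role (rX i) = diagOn {w | valuation w i = true} := by
  simp [treeModel, rX, Nat.add_div]

@[simp] lemma treeModel_rD (i : ℕ) :
    (treeModel Cl).role (rD i) = diagOn {w | w.length = i} := by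
  simp [treeModel, rD, Nat.add_div]

@[simp] lemma treeModel_rC (j : ℕ) : (treeModel Cl).role (rC j) = diagOn Set.univ := by
  simp [treeModel, rC, Nat.add_mod]

@[simp] lemma treeModel_rP1 (j : Fin m) :
    (treeModel Cl).role (rP1 j) = diagOn (falsifiers (Cl j).1) := by
  simp [treeModel, rP1, Nat.add_mod, Nat.add_div]

@[simp] lemma treeModel_rP2 (j : Fin m) :
    (treeModel Cl).role (rP2 j) = diagOn (falsifiers (Cl j).1 ∩ falsifiers (Cl j).2.1) := by
  simp [treeModel, rP2, Nat.add_mod, Nat.add_div]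

@[simp] lemma treeModel_rF : (treeModel Cl).role rF = ∅ := rfl

@[simp] lemma sem_til_treeModel (l : Fin n × Bool) :
    (til l).sem (treeModel Cl) = falsifiers l := by
  obtain ⟨v, _ | _⟩ := l <;> ext w <;> simp [til, falsifiers, litEval, sem_atom]

lemma falsifiers_inter_eq_empty (taut : ∀ σ : ℕ → Bool, matrixEval Cl σ) (j : Fin m) :
    falsifiers (Cl j).1 ∩ falsifiers (Cl j).2.1 ∩ falsifiers (Cl j).2.2 = ∅ := by
  ext w
  simp only [falsifiers, Set.mem_inter_iff, Set.mem_ofPred_eq, Set.mem_empty_iff_false, iff_false]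
  rintro ⟨⟨h₁, h₂⟩, h₃⟩
  simpa [h₁, h₂, h₃] using taut (valuation w) j

theorem satTBox_treeModel (taut : ∀ σ : ℕ → Bool, matrixEval Cl σ) :
    satTBox (treeModel Cl) (Tphi' n m Cl) := by
  simp only [Tphi', satTBox_append, satTBox_flatten, satTBox_flatMap, satTBox_ofFn, satTBox_cons,
    satTBox_nil, satTBox_eqAx, List.forall_mem_ofFn_iff, List.mem_range, and_true,
    apply_ite (satTBox _), if_true_right, and_assoc]
  simp only [satGCI, Set.subset_def, Set.ext_iff, sem_atom, mem_sem_ex, mem_sem_all]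
  refine ⟨?_, ?_, ?_, ?_, ?_, ?_, ?_, ?_, ?_, ?_, ?_⟩
  · simp
  · simp only [treeModel_dA, treeModel_xpA, treeModel_xmA, treeModel_rR, Set.mem_ofPred_eq]
    exact fun i => ⟨fun w hw => ⟨_, ⟨hw, _, rfl⟩, hw ▸ valuation_append_length w true⟩,
      fun w hw => ⟨_, ⟨hw, _, rfl⟩, hw ▸ valuation_append_length w false⟩⟩
  · simp only [treeModel_dA, treeModel_rR, Set.mem_ofPred_eq]
    rintro i w hw _ ⟨-, b, rfl⟩
    simp [hw]
  · simp +contextual [Nat.ne_of_gt]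
  · simp only [treeModel_xpA, treeModel_xmA, treeModel_rR, Set.mem_ofPred_eq]
    rintro k - i - hki
    constructor <;> rintro w hw _ ⟨rfl, b, rfl⟩ <;> rwa [valuation_append_of_lt hki]
  · simpa +contextual [Set.eq_empty_iff_forall_notMem] using falsifiers_inter_eq_empty Cl taut
  · simp
  · simp
  · simp
  · simp
  · exact fun w _ =>
      (sem_allChain_eq_univ (C := .atom fA') (treeModel_fA' Cl) _).symm ▸ Set.mem_univ w

end TreeModel

section Reasoning

variable {n m : ℕ} {Cl : Fin m → (Fin n × Bool) × (Fin n × Bool) × (Fin n × Bool)}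
  {Δ : Type} {I : DLInterp Δ}

lemma exists_descendant_agreeing
    (h3 : ∀ i : Fin n,
      satGCI I (.atom (dA i)) (.ex (rR i) (.atom (xpA i))) ∧
        satGCI I (.atom (dA i)) (.ex (rR i) (.atom (xmA i))))
    (h4 : ∀ i : Fin n, satGCI I (.atom (dA i)) (.all (rR i) (.atom (dA (i + 1)))))
    (h5 : ∀ k < n, ∀ i < n, k < i →
      satGCI I (.atom (xpA k)) (.all (rR i) (.atom (xpA k))) ∧
        satGCI I (.atom (xmA k)) (.all (rR i) (.atom (xmA k))))
    (h10 : satGCI I (.atom (dA 0)) (allChain (List.ofFn fun i : Fin n => rR i) (.atom fA')))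
    {e : Δ} (he : e ∈ I.atom (dA 0)) (σ : ℕ → Bool) :
    ∀ i ≤ n, ∃ y ∈ I.atom (dA i),
      y ∈ (allChain ((List.ofFn fun i : Fin n => rR i).drop i) (.atom fA')).sem I ∧
      ∀ k < i, y ∈ I.atom (if σ k then xpA k else xmA k) := by
  intro i
  induction i with
  | zero => exact fun _ => ⟨e, he, h10 he, fun k hk => absurd hk k.not_lt_zero⟩
  | succ i ih =>
    intro hi
    obtain ⟨y, hy, hyChain, hyσ⟩ := ih (by omega)
    obtain ⟨z, hyz, hz⟩ :
        ∃ z, (y, z) ∈ I.role (rR i) ∧ z ∈ I.atom (if σ i then xpA i else xmA i) := by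
      cases σ i
      · exact (h3 ⟨i, hi⟩).2 hy
      · exact (h3 ⟨i, hi⟩).1 hy
    refine ⟨z, h4 ⟨i, hi⟩ hy z hyz, ?_, fun k hk => ?_⟩
    · rw [allChain_drop (by simpa using hi), List.getElem_ofFn] at hyChain
      exact hyChain z hyz
    · rcases Nat.lt_succ_iff_lt_or_eq.1 hk with hk | rfl
      · have hyk := hyσ k hk
        split_ifs at hyk ⊢
        · exact (h5 k (by omega) i hi hk).1 hyk z hyz
        · exact (h5 k (by omega) i hi hk).2 hyk z hyz
      · exact hz

lemma mem_til_of_litEval_eq_false {σ : ℕ → Bool} {y : Δ}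
    (hσ : ∀ k < n, y ∈ I.atom (if σ k then xpA k else xmA k)) {l : Fin n × Bool}
    (hl : litEval σ l = false) : y ∈ (til l).sem I := by
  obtain ⟨v, _ | _⟩ := l <;> have := hσ v v.isLt <;> simp_all [til, litEval, sem_atom]

lemma mem_cmA_of_mem_til {l₁ l₂ l₃ : Fin n × Bool} {j : ℕ}
    (h6 : satGCI I (til l₁) (.ex (rP1 j) ct) ∧ satGCI I (til l₂) (.all (rP1 j) (til l₂)) ∧
      satGCI I (.ex (rP1 j) (til l₂)) (.ex (rP2 j) ct) ∧
      satGCI I (til l₃) (.all (rP2 j) (til l₃)) ∧ satGCI I (.ex (rP2 j) (til l₃)) (.atom (cmA j)))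
    {y : Δ} (h₁ : y ∈ (til l₁).sem I) (h₂ : y ∈ (til l₂).sem I) (h₃ : y ∈ (til l₃).sem I) :
    y ∈ I.atom (cmA j) := by
  obtain ⟨hP₁, hP₁l₂, hP₂, hP₂l₃, hC⟩ := h6
  obtain ⟨z₁, hyz₁, -⟩ := hP₁ h₁
  obtain ⟨z₂, hyz₂, -⟩ := hP₂ ⟨z₁, hyz₁, hP₁l₂ h₂ z₁ hyz₁⟩
  exact hC ⟨z₂, hyz₂, hP₂l₃ h₃ z₂ hyz₂⟩

lemma matrixEval_of_mem_fA'
    (h6 : ∀ j : Fin m,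
      satGCI I (til (Cl j).1) (.ex (rP1 j) ct) ∧
        satGCI I (til (Cl j).2.1) (.all (rP1 j) (til (Cl j).2.1)) ∧
        satGCI I (.ex (rP1 j) (til (Cl j).2.1)) (.ex (rP2 j) ct) ∧
        satGCI I (til (Cl j).2.2) (.all (rP2 j) (til (Cl j).2.2)) ∧
        satGCI I (.ex (rP2 j) (til (Cl j).2.2)) (.atom (cmA j)))
    (h7 : ∀ j : Fin m, satGCI I (.atom (cmA j)) (.atom fA))
    (h8 : satGCI I (.atom fA) (.ex rF ct)) (h8' : satGCI I (.atom fA') (.all rF cbot))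
    {σ : ℕ → Bool} {y : Δ} (hy : y ∈ I.atom fA')
    (hσ : ∀ k < n, y ∈ I.atom (if σ k then xpA k else xmA k)) :
    matrixEval Cl σ := by
  intro j
  by_contra hj
  simp only [Bool.or_eq_true, not_or, Bool.not_eq_true] at hj
  obtain ⟨⟨h₁, h₂⟩, h₃⟩ := hj
  have hf : y ∈ I.atom fA := h7 j <| mem_cmA_of_mem_til (h6 j)
    (mem_til_of_litEval_eq_false hσ h₁) (mem_til_of_litEval_eq_false hσ h₂)
    (mem_til_of_litEval_eq_false hσ h₃)
  obtain ⟨w, hyw, -⟩ := h8 hf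
  simpa using h8' hy w hyw

theorem matrixEval_of_satTBox (hT : satTBox I (Tphi' n m Cl)) {e : Δ} (he : e ∈ I.atom (dA 0))
    (σ : ℕ → Bool) : matrixEval Cl σ := by
  simp only [Tphi', satTBox_append, satTBox_flatten, satTBox_flatMap, satTBox_ofFn, satTBox_cons,
    satTBox_nil, satTBox_eqAx, List.forall_mem_ofFn_iff, List.mem_range, and_true,
    apply_ite (satTBox I), if_true_right, and_assoc] at hT
  obtain ⟨-, h3, h4, -, h5, h6, h7, h8, h8', -, h10⟩ := hT
  obtain ⟨y, -, hy, hσ⟩ := exists_descendant_agreeing h3 h4 h5 h10 he σ n le_rfl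
  rw [List.drop_of_length_le (by simp), allChain] at hy
  exact matrixEval_of_mem_fA' h6 h7 h8 h8' hy hσ

end Reasoning

/-- the 3-CNF formula `φ = C_1 ∧ ⋯ ∧ C_m` over `x_1, …, x_n` is a tautology
iff some interpretation `I` satisfies `T'_φ` with `d_0^I ≠ ∅`. -/
theorem stmt_16 (n m : ℕ)
    (Cl : Fin m → (Fin n × Bool) × (Fin n × Bool) × (Fin n × Bool)) :
    (∀ σ : ℕ → Bool, matrixEval Cl σ) ↔
      ∃ (Δ : Type) (I : DLInterp Δ), satTBox I (Tphi' n m Cl) ∧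
        ((DLConcept.atom (dA 0)).sem I).Nonempty := by
  constructor
  · intro taut
    exact ⟨List Bool, treeModel Cl, satTBox_treeModel Cl taut, [], by simp [sem_atom]⟩
  · rintro ⟨Δ, I, hT, e, he⟩ σ
    exact matrixEval_of_satTBox hT he σ
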